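/- Let T_m (m ≥ 1) be the edge-weighted tree with root ρ, internal vertices v_1,…,v_m each joined to ρ by an edge of length m, and leaves u_{i,j} for 1 ≤ i,j ≤ m, where u_{i,j} is joined to v_i by an edge of length 1; distances are shortest-path distances. Order the leaves as u_{1,1}, u_{2,1}, …, u_{m,1}, u_{1,2}, …, u_{m,2}, …, u_{m,m} (i.e., u_{i,j} precedes u_{i',j'} iff j < j', or j = j' and i < i'). Then for every 1 ≤ q ≤ m², every walk in T_m starting at ρ that visits the first q leaves of this order, in this order (as a subsequence of the walk), has total length at least (m+1) + (q−1)(2m+2). -/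

import Mathlib

/-- The vertex set of the tree `T_m`: root `none`, internal vertices
`some (Sum.inl i)` (the `v i`), and leaves `some (Sum.inr (i, j))`
(the `u i j`). -/
abbrev TmV (m : ℕ) := Option (Fin m ⊕ Fin m × Fin m)

/-- The branch (subtree index) of a vertex of `T_m`. -/
def tmBranch {m : ℕ} : TmV m → Option (Fin m)
  | none => none
  | some (Sum.inl i) => some i
  | some (Sum.inr p) => some p.1

/-- Distance of a vertex of `T_m` to the root: the `v i` are at distance `m`
(edge lengths `m`), the leaves `u i j` at distance `m + 1` (leaf edges of
length `1`). -/
noncomputable def tmVtr {m : ℕ} : TmV m → ℝ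
  | none => 0
  | some (Sum.inl _) => (m : ℝ)
  | some (Sum.inr _) => (m : ℝ) + 1

/-- The shortest-path metric of `T_m`. -/
noncomputable def tmDist {m : ℕ} (x y : TmV m) : ℝ :=
  if x = y then 0
  else tmVtr x + tmVtr y - (if tmBranch x = tmBranch y then 2 * (m : ℝ) else 0)

/-- The length of a walk (a finite sequence of vertices). -/
noncomputable def walkLen {V : Type} (d : V → V → ℝ) : List V → ℝ
  | [] => 0
  | [_] => 0
  | x :: y :: rest => d x y + walkLen d (y :: rest)

/-- The `k`-th (0-based) leaf in the order
`u 1 1, u 2 1, …, u m 1, u 1 2, …, u m m`. -/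
def tmLeaf (m : ℕ) (hm : 0 < m) (k : ℕ) (hk : k < m * m) : TmV m :=
  some (Sum.inr (⟨k % m, Nat.mod_lt _ hm⟩, ⟨k / m, (Nat.div_lt_iff_lt_mul hm).mpr hk⟩))

/-!
By the triangle inequality, deleting vertices from a walk never makes it longer, so a walk
from `ρ` is at least as long as the walk `ρ, u₁₁, u₂₁, …` through the first `q` leaves alone. Consecutive leaves of the order lie below different internal vertices, hence are
`2m + 2` apart, and the first leaf is at distance `m + 1` from the root.
-/

section WalkLen

variable {V : Type} (d : V → V → ℝ)

@[simp] lemma walkLen_cons_cons (x y : V) (l : List V) :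
    walkLen d (x :: y :: l) = d x y + walkLen d (y :: l) := rfl

lemma walkLen_cons_le_of_sublist (hd : ∀ x y, 0 ≤ d x y)
    (htri : ∀ x y z, d x z ≤ d x y + d y z) {l₁ l₂ : List V} (hs : l₁.Sublist l₂) (a : V) :
    walkLen d (a :: l₁) ≤ walkLen d (a :: l₂) := by
  induction hs generalizing a with
  | slnil => rfl
  | @cons l₁ l₂ b _ ih =>
    have hskip : walkLen d (a :: l₁) ≤ d a b + walkLen d (b :: l₁) := by
      cases l₁ with
      | nil => simpa [walkLen] using hd a b
      | cons c l => simp only [walkLen_cons_cons]; linarith [htri a b c]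
    rw [walkLen_cons_cons]
    linarith [ih b]
  | cons_cons b _ ih =>
    simp only [walkLen_cons_cons]
    linarith [ih b]

lemma walkLen_cons_map_range (a : V) (f : ℕ → V) (n : ℕ) :
    walkLen d (a :: (List.range (n + 1)).map f) =
      d a (f 0) + ∑ i ∈ Finset.range n, d (f i) (f (i + 1)) := by
  induction n generalizing a f with
  | zero => simp [walkLen]
  | succ n ih =>
    rw [List.range_succ_eq_map, List.map_cons, walkLen_cons_cons, List.map_map, ih,
      Finset.sum_range_succ' _ n]
    simp only [Function.comp_apply, Nat.succ_eq_add_one]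
    ring

end WalkLen

section Tm

variable {m : ℕ}

lemma tmVtr_nonneg (x : TmV m) : 0 ≤ tmVtr x := by
  rcases x with _ | (i | p) <;> simp only [tmVtr] <;> positivity

lemma le_tmVtr_of_ne_none {x : TmV m} (hx : x ≠ none) : (m : ℝ) ≤ tmVtr x := by
  rcases x with _ | (_ | _) <;> simp_all [tmVtr]

lemma tmBranch_eq_none_iff {x : TmV m} : tmBranch x = none ↔ x = none := by
  rcases x with _ | (i | p) <;> simp [tmBranch]

lemma le_tmVtr_of_tmBranch_eq {x y : TmV m} (h : tmBranch x = tmBranch y) (hne : x ≠ y) :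
    (m : ℝ) ≤ tmVtr x := by
  refine le_tmVtr_of_ne_none fun hx => hne ?_
  subst hx
  exact (tmBranch_eq_none_iff.mp (by simpa [tmBranch] using h.symm)).symm

lemma tmDist_self (x : TmV m) : tmDist x x = 0 := by simp [tmDist]

lemma tmDist_nonneg (x y : TmV m) : 0 ≤ tmDist x y := by
  unfold tmDist
  split_ifs with hxy hbr
  · rfl
  · linarith [le_tmVtr_of_tmBranch_eq hbr hxy, le_tmVtr_of_tmBranch_eq hbr.symm (Ne.symm hxy)]
  · linarith [tmVtr_nonneg x, tmVtr_nonneg y]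

lemma tmDist_triangle (x y z : TmV m) : tmDist x z ≤ tmDist x y + tmDist y z := by
  by_cases hxz : x = z
  · subst hxz
    rw [tmDist_self]
    linarith [tmDist_nonneg x y, tmDist_nonneg y x]
  by_cases hxy : x = y
  · subst hxy
    rw [tmDist_self, zero_add]
  by_cases hyz : y = z
  · subst hyz
    rw [tmDist_self, add_zero]
  have hy := tmVtr_nonneg y
  have hm : (0 : ℝ) ≤ m := Nat.cast_nonneg m
  have hxy' := fun h => le_tmVtr_of_tmBranch_eq (Eq.symm h) (Ne.symm hxy)
  have hyz' := fun h => le_tmVtr_of_tmBranch_eq h hyz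
  rw [tmDist, tmDist, tmDist, if_neg hxz, if_neg hxy, if_neg hyz]
  split_ifs <;> grind

/-- `tmLeaf` without its bound on `k`, so that lists of leaves can be built with `List.map`. -/
def tmLeafMod (hm : 0 < m) (k : ℕ) : TmV m :=
  some (Sum.inr (⟨k % m, Nat.mod_lt _ hm⟩, ⟨k / m % m, Nat.mod_lt _ hm⟩))

lemma tmLeaf_eq_tmLeafMod (hm : 0 < m) (k : ℕ) (hk : k < m * m) :
    tmLeaf m hm k hk = tmLeafMod hm k := by
  simp [tmLeaf, tmLeafMod, Nat.mod_eq_of_lt ((Nat.div_lt_iff_lt_mul hm).mpr hk)]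

lemma tmDist_none_tmLeafMod (hm : 0 < m) (k : ℕ) :
    tmDist (none : TmV m) (tmLeafMod hm k) = m + 1 := by
  simp [tmDist, tmLeafMod, tmBranch, tmVtr]

lemma mod_ne_add_one_mod {k : ℕ} (hm : 1 < m) : k % m ≠ (k + 1) % m := by
  have := Nat.mod_lt k (by omega : 0 < m)
  rw [Nat.add_mod_eq_ite, Nat.mod_eq_of_lt hm]
  split_ifs <;> omega

lemma tmDist_tmLeafMod_succ (hm : 0 < m) (hm1 : 1 < m) (k : ℕ) :
    tmDist (tmLeafMod hm k) (tmLeafMod hm (k + 1)) = 2 * m + 2 := by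
  have hbr : tmBranch (tmLeafMod hm k) ≠ tmBranch (tmLeafMod hm (k + 1)) := by
    simpa [tmBranch, tmLeafMod] using mod_ne_add_one_mod hm1
  rw [tmDist, if_neg (fun h => hbr (congrArg tmBranch h)), if_neg hbr]
  simp only [tmLeafMod, tmVtr]
  ring

end Tm

/-- Every walk in `T_m` starting at the root that visits the
first `q` leaves of the order `u 1 1, u 2 1, …, u m 1, u 1 2, …` in this order
(as a subsequence of the walk) has total length at least
`(m+1) + (q-1)(2m+2)`. -/
theorem tm_walk_lower_bound (m q : ℕ) (hm : 1 ≤ m) (hq1 : 1 ≤ q) (hq : q ≤ m * m)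
    (w : List (TmV m)) (hstart : w.head? = some (none : TmV m))
    (hvisit : ((List.range q).pmap (fun k hk => tmLeaf m hm k hk)
        (fun k hk => lt_of_lt_of_le (List.mem_range.mp hk) hq)).Sublist w) :
    ((m : ℝ) + 1) + ((q : ℝ) - 1) * (2 * (m : ℝ) + 2) ≤ walkLen tmDist w := by
  obtain ⟨w, rfl⟩ : ∃ w', w = none :: w' := ⟨w.tail, List.eq_cons_of_mem_head? hstart⟩
  obtain ⟨n, rfl⟩ : ∃ n, q = n + 1 := ⟨q - 1, by omega⟩
  have hleaves : (fun k hk => tmLeaf m hm k hk) = fun k (_ : k < m * m) => tmLeafMod hm k := by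
    funext k hk
    exact tmLeaf_eq_tmLeafMod hm k hk
  rw [hleaves, List.pmap_eq_map] at hvisit
  have hsteps : ∀ i ∈ Finset.range n,
      tmDist (tmLeafMod hm i) (tmLeafMod hm (i + 1)) = 2 * (m : ℝ) + 2 := by
    intro i hi
    have hm1 : 1 < m := by nlinarith [Finset.mem_range.mp hi]
    exact tmDist_tmLeafMod_succ hm hm1 i
  calc ((m : ℝ) + 1) + ((n + 1 : ℕ) - 1) * (2 * (m : ℝ) + 2)
      = walkLen tmDist (none :: (List.range (n + 1)).map (tmLeafMod hm)) := by
        rw [walkLen_cons_map_range, tmDist_none_tmLeafMod, Finset.sum_congr rfl hsteps]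
        simp only [Finset.sum_const, Finset.card_range, nsmul_eq_mul]
        push_cast
        ring
    _ ≤ walkLen tmDist (none :: none :: w) :=
        walkLen_cons_le_of_sublist _ tmDist_nonneg tmDist_triangle hvisit none
    _ = walkLen tmDist (none :: w) := by rw [walkLen_cons_cons, tmDist_self, zero_add]
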